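/- Let (H(s), P(s), τ) be an adiabatic process as in the context, let Λ̃(s) = ∫₀^s λ(s')ds', and define V_A(s) = e^{iτΛ̃(s)}·U_A(s). Then V_A satisfies the intertwining property V_A(s)·P(0) = P(s)·V_A(s) for all s ∈ [0,1], as well as the differential equation ∂_s V_A(s) = [Ṗ(s), P(s)]·V_A(s). -/

import Mathlib

/-!
The phase `e^{iτΛ̃}` cancels the scalar part `λ` of the adiabatic Hamiltonian, so
`V_A' = [Ṗ, P] V_A`. Differentiating `P² = P` gives `Ṗ = ṖP + PṖ`, hence `PṖP = 0` and
`[[Ṗ, P], P] = Ṗ`. Consequently `D = P V_A - V_A P(0)` solves the same linear equation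
`D' = [Ṗ, P] D` with `D(0) = 0`, and uniqueness for linear ODEs (Grönwall) forces `D = 0`.
-/

open Set ContinuousLinearMap

/-- The commutatorCLM `[A,B] = AB - BA` of two continuous linear operators. -/
def commutatorCLM {H : Type*} [NormedAddCommGroup H] [InnerProductSpace ℂ H]
    (A B : H →L[ℂ] H) : H →L[ℂ] H :=
  A.comp B - B.comp A

theorem commutatorCLM_eq_lie {H : Type*} [NormedAddCommGroup H] [InnerProductSpace ℂ H]
    (A B : H →L[ℂ] H) : commutatorCLM A B = ⁅A, B⁆ :=
  (Ring.lie_def A B).symm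

theorem IsIdempotentElem.lie_lie_eq {R : Type*} [Ring R] {p q : R} (hp : IsIdempotentElem p)
    (hq : q = q * p + p * q) : ⁅⁅q, p⁆, p⁆ = q := by
  have hpqp : p * q * p = 0 := by
    have h := congrArg (p * ·) hq
    simp only [mul_add, ← mul_assoc, hp.eq] at h
    exact add_eq_right.mp h.symm
  calc ⁅⁅q, p⁆, p⁆ = q * p * p - p * q * p - p * (q * p) + p * (p * q) := by
        simp only [Ring.lie_def]; noncomm_ring
    _ = q * p + p * q := by
        rw [mul_assoc q, hp.eq, ← mul_assoc p, hpqp, ← mul_assoc p p, hp.eq]; abel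
    _ = q := hq.symm

section NormedRing

variable {A : Type*} [NormedRing A] [NormedAlgebra ℝ A]

theorem HasDerivWithinAt.eq_mul_add_mul_of_isIdempotentElem {P : ℝ → A} {P' : A} {s : Set ℝ}
    {x : ℝ} (hP : ∀ t ∈ s, IsIdempotentElem (P t)) (hx : x ∈ s) (hs : UniqueDiffWithinAt ℝ s x)
    (hd : HasDerivWithinAt P P' s x) : P' = P' * P x + P x * P' :=
  hs.eq_deriv s hd <| (hd.fun_mul hd).congr (fun t ht => (hP t ht).symm) (hP x hx).symm

theorem eqOn_zero_of_hasDerivWithinAt_mul_left {C X : ℝ → A} {a b : ℝ}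
    (hC : ContinuousOn C (Icc a b))
    (hX : ∀ t ∈ Icc a b, HasDerivWithinAt X (C t * X t) (Icc a b) t) (ha : X a = 0) :
    EqOn X 0 (Icc a b) := by
  obtain ⟨M, hM⟩ := isCompact_Icc.exists_bound_of_continuousOn hC
  have hlip : ∀ t ∈ Ico a b, LipschitzOnWith M.toNNReal (C t * ·) univ := fun t ht =>
    LipschitzWith.lipschitzOnWith <| LipschitzWith.of_dist_le_mul fun Y Z => by
      rw [dist_eq_norm, dist_eq_norm, ← mul_sub]
      exact (norm_mul_le _ _).trans <| by
        gcongr; exact (hM t (Ico_subset_Icc_self ht)).trans (Real.le_coe_toNNReal M)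
  refine ODE_solution_unique_of_mem_Icc_right hlip
    (fun t ht => (hX t ht).continuousWithinAt) (fun t ht => ?_) (fun _ _ => mem_univ _)
    continuousOn_const (fun t _ => ?_) (fun _ _ => mem_univ _) ha
  · exact (hX t (Ico_subset_Icc_self ht)).mono_of_mem_nhdsWithin (Icc_mem_nhdsGE_of_mem ht)
  · rw [Pi.zero_apply, mul_zero]
    exact hasDerivWithinAt_const t (Ici t) 0

theorem mul_eq_mul_of_hasDerivWithinAt_lie {P P' V C : ℝ → A} {a b : ℝ}
    (hC : ContinuousOn C (Icc a b))
    (hP : ∀ t ∈ Icc a b, HasDerivWithinAt P (P' t) (Icc a b) t)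
    (hP' : ∀ t ∈ Icc a b, P' t = ⁅C t, P t⁆)
    (hV : ∀ t ∈ Icc a b, HasDerivWithinAt V (C t * V t) (Icc a b) t)
    (ha : Commute (V a) (P a)) :
    ∀ t ∈ Icc a b, V t * P a = P t * V t := by
  have hD : ∀ t ∈ Icc a b, HasDerivWithinAt (fun r => P r * V r - V r * P a)
      (C t * (P t * V t - V t * P a)) (Icc a b) t := fun t ht => by
    refine (((hP t ht).fun_mul (hV t ht)).sub ((hV t ht).mul_const (P a))).congr_deriv ?_
    rw [hP' t ht, Ring.lie_def]; noncomm_ring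
  intro t ht
  exact (sub_eq_zero.mp (eqOn_zero_of_hasDerivWithinAt_mul_left hC hD
    (sub_eq_zero.mpr ha.eq.symm) ht)).symm

end NormedRing

theorem hasDerivWithinAt_integral_of_continuousOn {E : Type*} [NormedAddCommGroup E]
    [NormedSpace ℝ E] [CompleteSpace E] {f : ℝ → E} {a b x : ℝ}
    (hf : ContinuousOn f (Icc a b)) (hx : x ∈ Icc a b) :
    HasDerivWithinAt (fun u => ∫ t in a..u, f t) (f x) (Icc a b) x := by
  have : Fact (x ∈ Icc a b) := ⟨hx⟩
  exact intervalIntegral.integral_hasDerivWithinAt_right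
    ((hf.mono (Icc_subset_Icc_right hx.2)).intervalIntegrable_of_Icc hx.1)
    (hf.stronglyMeasurableAtFilter_nhdsWithin measurableSet_Icc x) (hf x hx)

theorem HasDerivWithinAt.cexp_smul {E : Type*} [NormedAddCommGroup E] [NormedSpace ℂ E]
    {f : ℝ → ℂ} {U : ℝ → E} {f' : ℂ} {W : E} {s : Set ℝ} {x : ℝ}
    (hf : HasDerivWithinAt f f' s x) (hU : HasDerivWithinAt U (-f' • U x + W) s x) :
    HasDerivWithinAt (fun r => Complex.exp (f r) • U r) (Complex.exp (f x) • W) s x := by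
  refine (hf.cexp.fun_smul hU).congr_deriv ?_
  rw [smul_add, neg_smul, smul_neg, smul_smul]; abel

theorem stmt10
    {H : Type*} [NormedAddCommGroup H] [InnerProductSpace ℂ H]
    (τ : ℝ) (hτ : 0 < τ)
    (P P' : ℝ → H →L[ℂ] H)
    (hPD : ∀ s ∈ Icc (0:ℝ) 1, HasDerivWithinAt P (P' s) (Icc 0 1) s)
    (hPC : ContinuousOn P' (Icc 0 1))
    (hPproj : ∀ s ∈ Icc (0:ℝ) 1, (P s).comp (P s) = P s)
    (lam : ℝ → ℝ) (hlam : ContinuousOn lam (Icc 0 1))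
    (UA : ℝ → H →L[ℂ] H) (hUA0 : UA 0 = 1)
    (hUAD : ∀ s ∈ Icc (0:ℝ) 1,
      HasDerivWithinAt UA
        ((-Complex.I * (τ : ℂ)) •
          (((lam s : ℂ) • (1 : H →L[ℂ] H)
            + (Complex.I / (τ : ℂ)) • commutatorCLM (P' s) (P s)).comp (UA s)))
        (Icc 0 1) s) :
    ∀ s ∈ Icc (0:ℝ) 1,
      (Complex.exp (Complex.I * (τ : ℂ) * ((∫ r in (0:ℝ)..s, lam r : ℝ) : ℂ)) • UA s).comp
          (P 0) =
        (P s).comp (Complex.exp (Complex.I * (τ : ℂ) * ((∫ r in (0:ℝ)..s, lam r : ℝ) : ℂ)) • UA s) ∧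
      HasDerivWithinAt
        (fun r => Complex.exp (Complex.I * (τ : ℂ) * ((∫ t in (0:ℝ)..r, lam t : ℝ) : ℂ)) • UA r)
        ((commutatorCLM (P' s) (P s)).comp
          (Complex.exp (Complex.I * (τ : ℂ) * ((∫ r in (0:ℝ)..s, lam r : ℝ) : ℂ)) • UA s))
        (Icc 0 1) s := by
  set C : ℝ → H →L[ℂ] H := fun s => commutatorCLM (P' s) (P s)
  set V : ℝ → H →L[ℂ] H :=
    fun r => Complex.exp (Complex.I * τ * ((∫ t in (0:ℝ)..r, lam t : ℝ) : ℂ)) • UA r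
  have hUA : ∀ s ∈ Icc (0:ℝ) 1, HasDerivWithinAt UA
      (-(Complex.I * τ * lam s) • UA s + C s * UA s) (Icc 0 1) s := fun s hs => by
    refine (hUAD s hs).congr_deriv ?_
    have hτ' : (τ : ℂ) ≠ 0 := Complex.ofReal_ne_zero.mpr hτ.ne'
    have hscalar : -Complex.I * τ * (Complex.I / τ) = 1 := by
      field_simp; rw [Complex.I_sq]; ring
    change (-Complex.I * τ) • (((lam s : ℂ) • 1 + (Complex.I / τ) • C s) * UA s) = _
    rw [add_mul, smul_mul_assoc, smul_mul_assoc, one_mul, smul_add, smul_smul, smul_smul,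
      hscalar, one_smul, neg_mul, neg_mul]
  have hV : ∀ s ∈ Icc (0:ℝ) 1, HasDerivWithinAt V (C s * V s) (Icc 0 1) s := fun s hs => by
    have hphase := (hasDerivWithinAt_integral_of_continuousOn hlam hs).ofReal_comp.const_mul
      (Complex.I * τ)
    rw [mul_smul_comm]
    exact hphase.cexp_smul (hUA s hs)
  have hP' : ∀ s ∈ Icc (0:ℝ) 1, P' s = ⁅C s, P s⁆ := fun s hs => by
    change P' s = ⁅commutatorCLM (P' s) (P s), P s⁆
    rw [commutatorCLM_eq_lie, IsIdempotentElem.lie_lie_eq (hPproj s hs)]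
    exact (hPD s hs).eq_mul_add_mul_of_isIdempotentElem hPproj hs
      (uniqueDiffOn_Icc zero_lt_one s hs)
  have hPcont : ContinuousOn P (Icc 0 1) := fun s hs => (hPD s hs).continuousWithinAt
  have hCcont : ContinuousOn C (Icc 0 1) := (hPC.clm_comp hPcont).sub (hPcont.clm_comp hPC)
  have hV0 : V 0 = 1 := by simp [V, hUA0]
  intro s hs
  exact ⟨mul_eq_mul_of_hasDerivWithinAt_lie hCcont hPD hP' hV (hV0 ▸ Commute.one_left _) s hs,
    hV s hs⟩
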